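/- Suppose the source (W_1,…,W_L) ~ p is balanced, let k be an integer with 2 ≤ k ≤ L−2, and let T ⊂ [1,L] be a subset with k ≤ |T| ≤ L−2. Then μ̄_k ≤ (1 + β(k,T)/((k−1)·α(k,T)))·μ̲_k, where α(k,T) := |T|·C(L−1,k) − (|T|−k)·C(|T|,k) and β(k,T) := |T|·C(L−1,k) − (L−1)·C(|T|,k), and C(n,k) denotes the binomial coefficient. -/

import Mathlib

open Finset Real

namespace MWRC

variable {L : ℕ} {W : Fin L → Type*} [∀ i, Fintype (W i)] [∀ i, DecidableEq (W i)]

/-- `p` is a joint probability mass function on `𝒲_1 × ⋯ × 𝒲_L`. -/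
def IsPMF (p : (∀ i, W i) → ℝ) : Prop :=
  (∀ x, 0 ≤ p x) ∧ ∑ x : ∀ i, W i, p x = 1

/-- Marginal of `p` on the coordinates in `A`. -/
noncomputable def marg (p : (∀ i, W i) → ℝ) (A : Finset (Fin L))
    (y : ∀ i : {a : Fin L // a ∈ A}, W i.1) : ℝ :=
  ∑ x : ∀ i, W i, if (fun j : {a : Fin L // a ∈ A} => x j.1) = y then p x else 0

/-- Base-2 Shannon entropy `H(W_A)` of the marginal of `p` on the coordinates in `A`
(with the convention `0 · log 0 = 0`, which is automatic since `logb 2 0 = 0`). -/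
noncomputable def margEnt (p : (∀ i, W i) → ℝ) (A : Finset (Fin L)) : ℝ :=
  -∑ y : ∀ i : {a : Fin L // a ∈ A}, W i.1, marg p A y * Real.logb 2 (marg p A y)

/-- Conditional entropy `H(W_A | W_B) = H(W_{A ∪ B}) - H(W_B)`. -/
noncomputable def condEnt (p : (∀ i, W i) → ℝ) (A B : Finset (Fin L)) : ℝ :=
  margEnt p (A ∪ B) - margEnt p B

/-- Conditional mutual information
`I(W_A; W_B | W_C) = H(W_A|W_C) + H(W_B|W_C) - H(W_{A∪B}|W_C)`. -/
noncomputable def condMI (p : (∀ i, W i) → ℝ) (A B C : Finset (Fin L)) : ℝ :=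
  condEnt p A C + condEnt p B C - condEnt p (A ∪ B) C

/-- The region `R(p)`. -/
def Rset (p : (∀ i, W i) → ℝ) : Set (Fin L → ℝ) :=
  {r | (∀ ℓ, 0 ≤ r ℓ) ∧
    ∀ S : Finset (Fin L), S ⊂ Finset.univ → condEnt p S Sᶜ ≤ ∑ i ∈ S, r i}

/-- `‖h(p)‖ = Σ_ℓ H(W_{ℓᶜ} | W_ℓ)`. -/
noncomputable def hNorm (p : (∀ i, W i) → ℝ) : ℝ :=
  ∑ ℓ : Fin L, condEnt p {ℓ}ᶜ {ℓ}

/-- `r*(p)`, with `r*_ℓ = ‖h(p)‖/(L-1) - H(W_{ℓᶜ}|W_ℓ)`. -/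
noncomputable def rstar (p : (∀ i, W i) → ℝ) : Fin L → ℝ :=
  fun ℓ => hNorm p / ((L : ℝ) - 1) - condEnt p {ℓ}ᶜ {ℓ}

/-- Membership in the class `𝒫*`. -/
def Pstar (p : (∀ i, W i) → ℝ) : Prop :=
  ∃ r ∈ Rset p, ∀ ℓ : Fin L, ∑ i ∈ ({ℓ}ᶜ : Finset (Fin L)), r i = condEnt p {ℓ}ᶜ {ℓ}

/-- Conditional multiple-mutual information `I_K` (with `I_∅ = 0`). -/
noncomputable def multiInfo (p : (∀ i, W i) → ℝ) (K : Finset (Fin L)) : ℝ :=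
  ∑ t ∈ Finset.Icc 1 K.card, (-1 : ℝ) ^ (t - 1) *
    ∑ T ∈ K.powerset.filter (fun T => T.card = t), condEnt p T Kᶜ

/-- `μ̄_k`: the largest `I_S` over subsets of cardinality `k`. -/
noncomputable def muMax (p : (∀ i, W i) → ℝ) (k : ℕ) : ℝ :=
  sSup {x | ∃ S : Finset (Fin L), S.card = k ∧ multiInfo p S = x}

/-- `μ̲_k`: the smallest `I_S` over subsets of cardinality `k`. -/
noncomputable def muMin (p : (∀ i, W i) → ℝ) (k : ℕ) : ℝ :=
  sInf {x | ∃ S : Finset (Fin L), S.card = k ∧ multiInfo p S = x}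

/-- `gap_k = 1 + (1/k)·(L−1)/(2L−k−3)`. -/
noncomputable def gap (L k : ℕ) : ℝ :=
  1 + (1 / (k : ℝ)) * (((L : ℝ) - 1) / (2 * (L : ℝ) - (k : ℝ) - 3))

/-- A source is balanced if `μ̄_k ≤ gap_k · μ̲_k` for all `k ∈ [2, L-1]`. -/
def Balanced (p : (∀ i, W i) → ℝ) : Prop :=
  ∀ k ∈ Finset.Icc 2 (L - 1), muMax p k ≤ gap L k * muMin p k

/-- `J_ℓ(K)`. -/
noncomputable def J (p : (∀ i, W i) → ℝ) (ℓ : Fin L) (K : Finset (Fin L)) : ℝ :=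
  if ℓ ∈ K then (((L : ℝ) - (K.card : ℝ)) / ((L : ℝ) - 1)) * multiInfo p K
  else ((1 - (K.card : ℝ)) / ((L : ℝ) - 1)) * multiInfo p K

/-- `r†_ℓ = Σ_{K ⊂ [1,L]} J_ℓ(K)`, the sum over all strict subsets of `[1,L]`. -/
noncomputable def rdag (p : (∀ i, W i) → ℝ) : Fin L → ℝ :=
  fun ℓ => ∑ K ∈ Finset.univ.powerset.filter (fun K => K ≠ Finset.univ), J p ℓ K

end MWRC


open MWRC Finset

/-!
Balancedness at `k` gives `μ̄_k ≤ gap_k · μ̲_k`, and since `gap_k > 1` and `μ̲_k ≤ μ̄_k` it also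
forces `μ̲_k ≥ 0`. It therefore suffices that `gap_k ≤ 1 + β/((k-1)α)`. With `n = L - 1` and
`m = |T|` this cross-multiplies to the binomial inequality
`n C(m,k) (k(2n-k-1) - (k-1)(m-k)) ≤ m C(n,k) (k(n-k-1) + n)`, which is an equality at
`m = n - 1` and propagates downward in `m` via `(m+1) C(m,k) = (m+1-k) C(m+1,k)`.
-/

lemma cast_choose_mul_succ {m k : ℕ} (hk : k ≤ m + 1) :
    (m.choose k : ℝ) * ((m : ℝ) + 1) = ((m + 1).choose k : ℝ) * ((m : ℝ) + 1 - k) := by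
  have h := congrArg (Nat.cast : ℕ → ℝ) (Nat.choose_mul_succ_eq m k)
  push_cast [Nat.cast_sub hk] at h
  exact h

lemma cast_choose_mul_le_of_lt {k m n : ℕ} (hkm : k ≤ m) (hmn : m < n) :
    (n : ℝ) * m.choose k * (k * (2 * n - k - 1) - (k - 1) * (m - k)) ≤
      m * n.choose k * (k * (n - k - 1) + n) := by
  obtain ⟨d, hd⟩ : ∃ d, m + d + 1 = n := ⟨n - m - 1, by omega⟩
  induction d generalizing m with
  | zero =>
    obtain rfl : n = m + 1 := by omega
    have hc := cast_choose_mul_succ (k := k) (m := m) (by omega)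
    push_cast
    linear_combination (k * (2 * ((m : ℝ) + 1) - k - 1) - (k - 1) * (m - k)) * hc
  | succ d ih =>
    have ih' := ih (m := m + 1) (by omega) (by omega) (by omega)
    push_cast at ih'
    have hc := cast_choose_mul_succ (k := k) (m := m) (by omega)
    have hkk : (0 : ℝ) ≤ k * (k - 1) := by
      rcases Nat.eq_zero_or_pos k with rfl | hk
      · simp
      · exact mul_nonneg k.cast_nonneg (by simp [Nat.one_le_cast.2 hk])
    have hmn' : (m : ℝ) + 2 ≤ n := by exact_mod_cast (by omega : m + 2 ≤ n)
    -- the weight `X j = k(2n-k-1) - (k-1)(j-k)` satisfies `m X(m+1) - (m+1-k) X m = k(k-1)(2n-2-m)`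
    have hstep : ((m : ℝ) + 1 - k) * (k * (2 * n - k - 1) - (k - 1) * (m - k)) ≤
        m * (k * (2 * n - k - 1) - (k - 1) * (m + 1 - k)) := by
      nlinarith [mul_nonneg hkk (by linarith : (0 : ℝ) ≤ 2 * n - 2 - m)]
    have key : ((m : ℝ) + 1) * (n * m.choose k * (k * (2 * n - k - 1) - (k - 1) * (m - k))) ≤
        ((m : ℝ) + 1) * (m * n.choose k * (k * (n - k - 1) + n)) :=
      calc ((m : ℝ) + 1) * (n * m.choose k * (k * (2 * n - k - 1) - (k - 1) * (m - k)))
          = n * (m + 1).choose k *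
              (((m : ℝ) + 1 - k) * (k * (2 * n - k - 1) - (k - 1) * (m - k))) := by
            linear_combination (n * (k * (2 * (n : ℝ) - k - 1) - (k - 1) * (m - k))) * hc
        _ ≤ n * (m + 1).choose k * (m * (k * (2 * n - k - 1) - (k - 1) * (m + 1 - k))) := by
            gcongr
        _ = m * (n * (m + 1).choose k * (k * (2 * n - k - 1) - (k - 1) * (m + 1 - k))) := by
            ring
        _ ≤ m * ((m + 1) * n.choose k * (k * (n - k - 1) + n)) := by gcongr
        _ = ((m : ℝ) + 1) * (m * n.choose k * (k * (n - k - 1) + n)) := by ring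
    exact le_of_mul_le_mul_left key (by positivity)

namespace MWRC

lemma one_lt_gap {L k : ℕ} (hk : 2 ≤ k) (hkL : k < L) : 1 < gap L k := by
  have hk' : (2 : ℝ) ≤ k := by exact_mod_cast hk
  have hkL' : (k : ℝ) + 1 ≤ L := by exact_mod_cast hkL
  have : 0 < 1 / (k : ℝ) * (((L : ℝ) - 1) / (2 * L - k - 3)) := by
    apply mul_pos <;> apply div_pos <;> linarith
  unfold gap
  linarith

lemma gap_le_one_add_div {L k m : ℕ} (hk : 2 ≤ k) (hkm : k ≤ m) (hmL : m + 2 ≤ L) :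
    gap L k ≤ 1 + ((m : ℝ) * (L - 1).choose k - ((L : ℝ) - 1) * m.choose k) /
      ((k - 1) * (m * (L - 1).choose k - (m - k) * m.choose k)) := by
  have hk' : (2 : ℝ) ≤ k := by exact_mod_cast hk
  have hkm' : (k : ℝ) ≤ m := by exact_mod_cast hkm
  have hmL' : (m : ℝ) + 2 ≤ L := by exact_mod_cast hmL
  have hB : (0 : ℝ) < m.choose k := by exact_mod_cast Nat.choose_pos hkm
  have hAB : (m.choose k : ℝ) ≤ (L - 1).choose k := by
    exact_mod_cast Nat.choose_le_choose k (by omega : m ≤ L - 1)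
  have hα : (0 : ℝ) < m * (L - 1).choose k - (m - k) * m.choose k := by
    nlinarith [mul_le_mul_of_nonneg_left hAB m.cast_nonneg]
  have hcomb := cast_choose_mul_le_of_lt hkm (by omega : m < L - 1)
  rw [Nat.cast_pred (by omega)] at hcomb
  rw [gap, one_div_mul_eq_div, div_div, add_le_add_iff_left,
    div_le_div_iff₀ (mul_pos (by linarith) (by linarith)) (mul_pos (by linarith) hα)]
  linear_combination hcomb

section Source

variable {L : ℕ} {W : Fin L → Type*} [∀ i, Fintype (W i)] [∀ i, DecidableEq (W i)]

lemma muMin_le_muMax (p : (∀ i, W i) → ℝ) {k : ℕ} (hk : k ≤ L) : muMin p k ≤ muMax p k := by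
  have hfin : {x | ∃ S : Finset (Fin L), S.card = k ∧ multiInfo p S = x}.Finite :=
    (Set.finite_range (multiInfo p)).subset fun _ ⟨S, _, hS⟩ => ⟨S, hS⟩
  obtain ⟨S, -, hS⟩ := exists_subset_card_eq (s := (univ : Finset (Fin L))) (n := k)
    (by rwa [card_univ, Fintype.card_fin])
  exact csInf_le_csSup ⟨multiInfo p S, S, hS, rfl⟩ hfin.bddBelow hfin.bddAbove

lemma muMin_nonneg {p : (∀ i, W i) → ℝ} (hbal : Balanced p) {k : ℕ} (hk : 2 ≤ k) (hkL : k < L) :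
    0 ≤ muMin p k := by
  have hbk := hbal k (mem_Icc.2 ⟨hk, by omega⟩)
  nlinarith [one_lt_gap hk hkL, muMin_le_muMax p hkL.le]

end Source

end MWRC

theorem stmt13_general {L : ℕ} {W : Fin L → Type*} [∀ i, Fintype (W i)]
    [∀ i, DecidableEq (W i)] (p : (∀ i, W i) → ℝ)
    (hbal : Balanced p) (k : ℕ) (hk2 : 2 ≤ k) (hkL : k + 2 ≤ L)
    (T : Finset (Fin L)) (hkT : k ≤ T.card)
    (hTL : T.card + 2 ≤ L) :
    muMax p k ≤
      (1 + ((T.card : ℝ) * ((L - 1).choose k : ℝ) - ((L : ℝ) - 1) * (T.card.choose k : ℝ)) /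
          (((k : ℝ) - 1) *
            ((T.card : ℝ) * ((L - 1).choose k : ℝ) -
              ((T.card : ℝ) - (k : ℝ)) * (T.card.choose k : ℝ)))) *
        muMin p k :=
  calc muMax p k ≤ gap L k * muMin p k := hbal k (mem_Icc.2 ⟨hk2, by omega⟩)
    _ ≤ _ := mul_le_mul_of_nonneg_right (gap_le_one_add_div hk2 hkT hTL)
        (muMin_nonneg hbal hk2 (by omega))

/-- For a balanced source, `2 ≤ k ≤ L−2` and `T ⊂ [1,L]` with
`k ≤ |T| ≤ L−2`: `μ̄_k ≤ (1 + β(k,T)/((k−1)·α(k,T)))·μ̲_k`, where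
`α(k,T) = |T|·C(L−1,k) − (|T|−k)·C(|T|,k)` and `β(k,T) = |T|·C(L−1,k) − (L−1)·C(|T|,k)`. -/
theorem stmt13 {L : ℕ} (hL : 4 ≤ L) {W : Fin L → Type*} [∀ i, Fintype (W i)]
    [∀ i, DecidableEq (W i)] (p : (∀ i, W i) → ℝ) (hp : IsPMF p)
    (hbal : Balanced p) (k : ℕ) (hk2 : 2 ≤ k) (hkL : k + 2 ≤ L)
    (T : Finset (Fin L)) (hT : T ⊂ Finset.univ) (hkT : k ≤ T.card)
    (hTL : T.card + 2 ≤ L) :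
    muMax p k ≤
      (1 + ((T.card : ℝ) * ((L - 1).choose k : ℝ) - ((L : ℝ) - 1) * (T.card.choose k : ℝ)) /
          (((k : ℝ) - 1) *
            ((T.card : ℝ) * ((L - 1).choose k : ℝ) -
              ((T.card : ℝ) - (k : ℝ)) * (T.card.choose k : ℝ)))) *
        muMin p k :=
  stmt13_general p hbal k hk2 hkL T hkT hTL
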